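/- arXiv:cs/0208044 — 3 statements merged into one kernel-verified Lean document; each statement's English description precedes it below -/
import Mathlib

section
/- Let ν be a probability measure on Cantor space with ν(w) > 0 for all strings w, let t > 0, and let U be a prefix set of finite binary strings with Σ_{u ∈ U} ν(u)^t < ∞. Then the function d_U^t is a ν-t-gale. -/
open Filter Topology

/-- A probability measure on Cantor space, given as a function on finite binary strings. -/
def IsProbMeasure (ν : List Bool → ℝ) : Prop :=
  ν [] = 1 ∧ (∀ w, 0 ≤ ν w) ∧ ∀ w, ν w = ν (w ++ [false]) + ν (w ++ [true])

/-- A `ν`-`s`-supergale. -/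
def IsSupergale (ν : List Bool → ℝ) (s : ℝ) (d : List Bool → ℝ) : Prop :=
  (∀ w, 0 ≤ d w) ∧
    ∀ w, ν (w ++ [false]) ^ s * d (w ++ [false]) + ν (w ++ [true]) ^ s * d (w ++ [true]) ≤
      ν w ^ s * d w

/-- A `ν`-`s`-gale. -/
def IsGale (ν : List Bool → ℝ) (s : ℝ) (d : List Bool → ℝ) : Prop :=
  (∀ w, 0 ≤ d w) ∧
    ∀ w, ν (w ++ [false]) ^ s * d (w ++ [false]) + ν (w ++ [true]) ^ s * d (w ++ [true]) =
      ν w ^ s * d w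

/-- The length-`n` prefix of an infinite binary sequence. -/
def prefixSeq (z : ℕ → Bool) (n : ℕ) : List Bool := List.ofFn fun i : Fin n => z i

/-- The success set `S^∞[d]`: sequences on whose prefixes `d` has limsup `∞`. -/
def SuccessSet (d : List Bool → ℝ) : Set (ℕ → Bool) :=
  {z | ∀ B : ℝ, ∃ n, B < d (prefixSeq z n)}

/-- A real-valued function on strings is computable if it has a uniformly computable
rational approximation to within `2 ^ (-r)`. -/
def ComputableRealFn (d : List Bool → ℝ) : Prop :=
  ∃ d' : List Bool → ℕ → ℚ,
    Computable (fun p : List Bool × ℕ => d' p.1 p.2) ∧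
      ∀ x r, |(d' x r : ℝ) - d x| ≤ (2 : ℝ) ^ (-(r : ℤ))

/-- A real number is computable if the corresponding constant function is. -/
def ComputableReal (s : ℝ) : Prop := ComputableRealFn fun _ => s

/-- Lower semicomputability (constructivity) of a real-valued function on strings. -/
def LowerSemicomputable (d : List Bool → ℝ) : Prop :=
  ∃ d' : List Bool → ℕ → ℚ,
    Computable (fun p : List Bool × ℕ => d' p.1 p.2) ∧
      (∀ x r, d' x r ≤ d' x (r + 1) ∧ (d' x r : ℝ) < d x) ∧
      ∀ x, Tendsto (fun r => (d' x r : ℝ)) atTop (𝓝 (d x))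

/-- `X` has constructive `ν`-measure zero: some constructive `ν`-martingale succeeds on `X`. -/
def ConstructiveNullSet (ν : List Bool → ℝ) (X : Set (ℕ → Bool)) : Prop :=
  ∃ d : List Bool → ℝ, LowerSemicomputable d ∧ IsGale ν 1 d ∧ X ⊆ SuccessSet d

/-- A well-balanced probability measure: `0 < ν w ≤ C * α ^ |w|` for some `0 < α < 1`, `C > 0`. -/
def WellBalanced (ν : List Bool → ℝ) : Prop :=
  ∃ α C : ℝ, 0 < α ∧ α < 1 ∧ 0 < C ∧ ∀ w : List Bool, 0 < ν w ∧ ν w ≤ C * α ^ w.length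

/-- A prefix set: no element is a proper prefix of another element. -/
def IsPrefixSet (U : Set (List Bool)) : Prop :=
  ∀ u ∈ U, ∀ v ∈ U, u <+: v → u = v

/-- The function `d_U^t` built from a set `U` of strings. -/
noncomputable def dU (ν : List Bool → ℝ) (t : ℝ) (U : Set (List Bool)) (w : List Bool) : ℝ :=
  ν w ^ (-t) *
    ((∑' u : {u : List Bool // w ++ u ∈ U}, ν (w ++ u.val) ^ t) +
      ∑ n ∈ Finset.range w.length,
        U.indicator (fun v => ν v ^ t / 2 ^ (w.length - n)) (w.take n))

/-- The uniform probability measure `μ(w) = 2 ^ (-|w|)`. -/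
noncomputable def uniformMeasure : List Bool → ℝ := fun w => (2 : ℝ) ^ (-(w.length : ℤ))

lemma tsum_cons_split (g : List Bool → ℝ) (hg : Summable g) :
    ∑' l, g l = g [] + ((∑' l, g (false :: l)) + ∑' l, g (true :: l)) := by
  classical
  have hinj : Function.Injective (fun p : Bool × List Bool => p.1 :: p.2) := by
    rintro ⟨a, l⟩ ⟨b, m⟩ h; simp_all
  have hsp : Summable (fun p : Bool × List Bool => g (p.1 :: p.2)) :=
    hg.comp_injective hinj
  have h1 := Summable.tsum_eq_add_tsum_ite hg ([] : List Bool)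
  have h2 : ∑' p : Bool × List Bool, (if p.1 :: p.2 = ([] : List Bool) then 0 else g (p.1 :: p.2))
      = ∑' l, if l = ([] : List Bool) then 0 else g l := by
    refine Function.Injective.tsum_eq hinj
      (f := fun l => if l = ([] : List Bool) then 0 else g l) ?_
    intro l hl
    rcases l with _ | ⟨b, m⟩
    · simp at hl
    · exact ⟨(b, m), rfl⟩
  have h3 : ∑' p : Bool × List Bool, (if p.1 :: p.2 = ([] : List Bool) then 0 else g (p.1 :: p.2))
      = ∑' p : Bool × List Bool, g (p.1 :: p.2) := by
    apply tsum_congr; intro p; simp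
  have h4 : ∑' p : Bool × List Bool, g (p.1 :: p.2)
      = ∑' b, ∑' l, g (b :: l) :=
    Summable.tsum_prod' hsp (fun b => hsp.comp_injective (fun l m h => by simpa using h))
  rw [h1, ← h2, h3, h4, tsum_bool]

/-- For a prefix set U with summable weights, d_U^t is a ν-t-gale. -/
theorem dU_isGale_of_prefixSet
    (ν : List Bool → ℝ) (hν : IsProbMeasure ν) (hpos : ∀ w, 0 < ν w)
    (t : ℝ) (ht : 0 < t) (U : Set (List Bool)) (hU : IsPrefixSet U)
    (hsum : Summable fun u : U => ν u.val ^ t) :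
    IsGale ν t (dU ν t U) := by
  classical
  set h : List Bool → ℝ := U.indicator fun v => ν v ^ t with hh
  have hf : Summable h := summable_subtype_iff_indicator.mp hsum
  have happ_inj : ∀ w : List Bool, Function.Injective (fun l : List Bool => w ++ l) :=
    fun w a b hab => List.append_cancel_left hab
  have hAsum : ∀ w : List Bool, Summable (fun l => h (w ++ l)) := fun w =>
    hf.comp_injective (happ_inj w)
  have hA : ∀ w : List Bool,
      (∑' u : {u : List Bool // w ++ u ∈ U}, ν (w ++ u.val) ^ t) = ∑' l, h (w ++ l) := by
    intro w
    refine (tsum_subtype {u : List Bool | w ++ u ∈ U} (fun u => ν (w ++ u) ^ t)).trans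
      (tsum_congr ?_)
    intro l
    by_cases hl : w ++ l ∈ U <;>
      simp [Set.indicator, hl, hh]
  have hB : ∀ (w : List Bool) (b : Bool),
      (∑ n ∈ Finset.range (w ++ [b]).length,
          U.indicator (fun v => ν v ^ t / 2 ^ ((w ++ [b]).length - n)) ((w ++ [b]).take n))
      = (∑ n ∈ Finset.range w.length,
          U.indicator (fun v => ν v ^ t / 2 ^ (w.length - n)) (w.take n)) / 2 + h w / 2 := by
    intro w b
    have hlen : (w ++ [b]).length = w.length + 1 := by simp
    simp only [hlen]
    rw [Finset.sum_range_succ]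
    have hlast : (w ++ [b]).take w.length = w := by
      simpa using List.take_left w [b]
    have hterm : ∀ n ∈ Finset.range w.length,
        U.indicator (fun v => ν v ^ t / 2 ^ (w.length + 1 - n)) ((w ++ [b]).take n)
          = U.indicator (fun v => ν v ^ t / 2 ^ (w.length - n)) (w.take n) / 2 := by
      intro n hn
      rw [Finset.mem_range] at hn
      rw [List.take_append_of_le_length hn.le]
      have he : w.length + 1 - n = (w.length - n) + 1 := by omega
      by_cases hmem : w.take n ∈ U
      · rw [Set.indicator_of_mem hmem, Set.indicator_of_mem hmem, he, pow_succ, ← div_div]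
      · simp [Set.indicator_of_notMem hmem]
    rw [Finset.sum_congr rfl hterm, ← Finset.sum_div, hlast]
    congr 1
    have he : w.length + 1 - w.length = 1 := by omega
    by_cases hmem : w ∈ U
    · rw [Set.indicator_of_mem hmem, he, pow_one, hh, Set.indicator_of_mem hmem]
    · simp [Set.indicator_of_notMem hmem, hh]
  constructor
  · intro w
    apply mul_nonneg (Real.rpow_nonneg (hpos w).le _)
    apply add_nonneg
    · exact tsum_nonneg fun u => Real.rpow_nonneg (hpos _).le _
    · exact Finset.sum_nonneg fun n _ => Set.indicator_nonneg
        (fun v _ => div_nonneg (Real.rpow_nonneg (hpos v).le t) (by positivity)) _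
  · intro w
    have cancel : ∀ x : List Bool, ν x ^ t * dU ν t U x =
        (∑' u : {u : List Bool // x ++ u ∈ U}, ν (x ++ u.val) ^ t) +
          ∑ n ∈ Finset.range x.length,
            U.indicator (fun v => ν v ^ t / 2 ^ (x.length - n)) (x.take n) := by
      intro x
      rw [dU, ← mul_assoc, ← Real.rpow_add (hpos x), add_neg_cancel, Real.rpow_zero, one_mul]
    rw [cancel, cancel, cancel]
    rw [hA w, hA (w ++ [false]), hA (w ++ [true]), hB w false, hB w true]
    have hsplit := tsum_cons_split (fun l => h (w ++ l)) (hAsum w)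
    simp only [List.append_nil] at hsplit
    have hc : ∀ b : Bool, (∑' l, h (w ++ b :: l)) = ∑' l, h ((w ++ [b]) ++ l) := by
      intro b
      apply tsum_congr
      intro l
      rw [List.append_assoc]
      rfl
    rw [hc false, hc true] at hsplit
    rw [hsplit]
    ring
end

section
/- Let ν be a probability measure on Cantor space with ν(w) > 0 for all strings w, let t > 0, and let U be any set of finite binary strings with Σ_{u ∈ U} ν(u)^t < ∞. Then the function d_U^t is a ν-t-gale. -/
open Filter Topology

/-! Multiplied by `ν w ^ t`, `d_U^t(w)` becomes `A w + B w`, where `A w` is the `ν^t`-mass of the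
strings of `U` extending `w` and `B w` is the mass of the proper prefixes of `w` in `U`, each halved
once per symbol between it and `w`. Splitting the extensions of `w` by their next symbol gives
`A w = [w ∈ U] ν(w)^t + A (w0) + A (w1)`, while `B (w0) = B (w1) = (B w + [w ∈ U] ν(w)^t) / 2`:
the mass that `A` loses at `w` is exactly what `B` gains, which is the gale identity. -/

open Finset

section TailSums

variable {α E : Type*} [NormedAddCommGroup E] [CompleteSpace E]

lemma tsum_list_eq_nil_add_sum_tsum_cons [Fintype α] {f : List α → E} (hf : Summable f) :
    ∑' u, f u = f [] + ∑ a, ∑' u, f (a :: u) := by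
  have hcons : Function.Injective fun p : α × List α => p.1 :: p.2 := fun p q h => by
    simpa [Prod.ext_iff] using h
  have hrange : ({[]}ᶜ : Set (List α)) = Set.range fun p : α × List α => p.1 :: p.2 := by
    ext (_ | ⟨a, u⟩) <;> simp
  have hprod : Summable fun p : α × List α => f (p.1 :: p.2) := hf.comp_injective hcons
  rw [← (hf.subtype _).tsum_add_tsum_compl (hf.subtype _), tsum_singleton, hrange,
    tsum_range _ hcons, hprod.tsum_prod' hprod.prod_factor, tsum_fintype]

lemma tsum_append_eq_add_sum_tsum_append [Fintype α] {f : List α → E} (hf : Summable f)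
    (w : List α) :
    ∑' u, f (w ++ u) = f w + ∑ a, ∑' u, f (w ++ [a] ++ u) := by
  have hw : Summable fun u => f (w ++ u) := hf.comp_injective (List.append_right_injective w)
  simpa using tsum_list_eq_nil_add_sum_tsum_cons hw

end TailSums

section PrefixSums

variable {α : Type*}

noncomputable def prefixHalvingSum (f : List α → ℝ) (w : List α) : ℝ :=
  ∑ n ∈ range w.length, f (w.take n) / 2 ^ (w.length - n)

lemma prefixHalvingSum_append_singleton (f : List α → ℝ) (w : List α) (a : α) :
    prefixHalvingSum f (w ++ [a]) = (prefixHalvingSum f w + f w) / 2 := by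
  rw [prefixHalvingSum, List.length_append, List.length_singleton, sum_range_succ,
    List.take_left, Nat.add_sub_cancel_left, pow_one, prefixHalvingSum, add_div, sum_div]
  congr 1
  refine sum_congr rfl fun n hn => ?_
  have hn : n < w.length := mem_range.mp hn
  rw [List.take_append_of_le_length hn.le, Nat.sub_add_comm hn.le, pow_succ, div_div]

lemma prefixHalvingSum_append_false_add_append_true (f : List Bool → ℝ) (w : List Bool) :
    prefixHalvingSum f (w ++ [false]) + prefixHalvingSum f (w ++ [true]) =
      prefixHalvingSum f w + f w := by
  simp only [prefixHalvingSum_append_singleton]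
  ring

end PrefixSums

section Gale

variable (ν : List Bool → ℝ) (t : ℝ) (U : Set (List Bool))

lemma dU_nonneg (hν : ∀ w, 0 ≤ ν w) (w : List Bool) : 0 ≤ dU ν t U w :=
  mul_nonneg (Real.rpow_nonneg (hν w) _) <| add_nonneg
    (tsum_nonneg fun _ => Real.rpow_nonneg (hν _) _)
    (sum_nonneg fun _ _ => Set.indicator_nonneg
      (fun v _ => div_nonneg (Real.rpow_nonneg (hν v) t) (by positivity)) _)

lemma rpow_mul_dU {w : List Bool} (hw : 0 < ν w) :
    ν w ^ t * dU ν t U w =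
      ∑' u, U.indicator (ν · ^ t) (w ++ u) + prefixHalvingSum (U.indicator (ν · ^ t)) w := by
  have hcancel : ν w ^ t * ν w ^ (-t) = 1 := by
    rw [← Real.rpow_add hw, add_neg_cancel, Real.rpow_zero]
  rw [dU, ← mul_assoc, hcancel, one_mul, prefixHalvingSum]
  congr 1
  · exact (tsum_subtype ((w ++ ·) ⁻¹' U) fun u => ν (w ++ u) ^ t).trans
      (tsum_congr fun _ => Set.indicator_comp_right (g := (ν · ^ t)) (w ++ ·))
  · refine sum_congr rfl fun n _ => ?_
    by_cases h : w.take n ∈ U <;> simp [h]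

end Gale

theorem dU_isGale_general
    (ν : List Bool → ℝ) (hpos : ∀ w, 0 < ν w)
    (t : ℝ) (U : Set (List Bool))
    (hsum : Summable fun u : U => ν u.val ^ t) :
    IsGale ν t (dU ν t U) := by
  refine ⟨dU_nonneg ν t U fun w => (hpos w).le, fun w => ?_⟩
  have hsum' : Summable (U.indicator (ν · ^ t)) := summable_subtype_iff_indicator.mp hsum
  rw [rpow_mul_dU ν t U (hpos _), rpow_mul_dU ν t U (hpos _), rpow_mul_dU ν t U (hpos _),
    tsum_append_eq_add_sum_tsum_append hsum' w, Fintype.sum_bool]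
  linarith [prefixHalvingSum_append_false_add_append_true (U.indicator (ν · ^ t)) w]

/-- For an arbitrary set U with summable weights, d_U^t is a ν-t-gale. -/
theorem dU_isGale
    (ν : List Bool → ℝ) (hν : IsProbMeasure ν) (hpos : ∀ w, 0 < ν w)
    (t : ℝ) (ht : 0 < t) (U : Set (List Bool))
    (hsum : Summable fun u : U => ν u.val ^ t) :
    IsGale ν t (dU ν t U) :=
  dU_isGale_general ν hpos t U hsum
end

section
/- Let ν be a probability measure on Cantor space, let 0 ≤ s < s', let c ∈ ℝ and ε > 0 satisfy ν(x) ≤ 2^{c − ε|x|} for every string x, and let d be a ν-s-supergale with d(λ) ≤ 1. For i ∈ ℕ set U_i = { w : d(w) > 2^i }. Then for every i ∈ ℕ, Σ_{w ∈ U_i} ν(w)^{s'} ≤ 2^{−i} · 2^{(s'−s)c} / (1 − 2^{−(s'−s)ε}); in particular this sum is finite. -/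
open Filter Topology

private lemma ofFn_snoc (n : ℕ) (v : Fin n → Bool) (b : Bool) :
    List.ofFn (Fin.snoc v b) = List.ofFn v ++ [b] := by
  rw [List.ofFn_succ']
  simp

private lemma sum_len_le (ν : List Bool → ℝ) (s : ℝ) (d : List Bool → ℝ)
    (hdle : ∀ w, ν (w ++ [false]) ^ s * d (w ++ [false]) +
      ν (w ++ [true]) ^ s * d (w ++ [true]) ≤ ν w ^ s * d w)
    (n : ℕ) :
    ∑ f : Fin n → Bool, ν (List.ofFn f) ^ s * d (List.ofFn f) ≤ ν [] ^ s * d [] := by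
  induction n with
  | zero => simp
  | succ n ih =>
    refine le_trans ?_ ih
    let e : ((Fin n → Bool) × Bool) ≃ (Fin (n + 1) → Bool) :=
      { toFun := fun p => Fin.snoc p.1 p.2
        invFun := fun f => (fun j => f j.castSucc, f (Fin.last n))
        left_inv := by intro p; simp
        right_inv := by
          intro f; ext j
          exact Fin.lastCases (by simp) (fun k => by simp) j }
    rw [← Fintype.sum_equiv e
      (fun p => ν (List.ofFn (Fin.snoc p.1 p.2)) ^ s * d (List.ofFn (Fin.snoc p.1 p.2)))
      (fun f => ν (List.ofFn f) ^ s * d (List.ofFn f)) (fun p => rfl)]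
    rw [Fintype.sum_prod_type]
    apply Finset.sum_le_sum
    intro v _
    rw [Fintype.sum_bool]
    simp only [ofFn_snoc]
    linarith [hdle (List.ofFn v)]

private lemma finset_len_le (ν : List Bool → ℝ) (hν0 : ∀ w, 0 ≤ ν w) (s : ℝ)
    (d : List Bool → ℝ) (hd0 : ∀ w, 0 ≤ d w)
    (hdle : ∀ w, ν (w ++ [false]) ^ s * d (w ++ [false]) +
      ν (w ++ [true]) ^ s * d (w ++ [true]) ≤ ν w ^ s * d w)
    (n : ℕ) (F : Finset (List Bool)) (hF : ∀ w ∈ F, w.length = n) :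
    ∑ w ∈ F, ν w ^ s * d w ≤ ν [] ^ s * d [] := by
  have hrec : ∀ w ∈ F, List.ofFn (fun j : Fin n => w.getD j false) = w := by
    intro w hw
    apply List.ext_getElem (by simp [hF w hw])
    intro j h1 h2
    rw [List.getElem_ofFn]
    exact List.getD_eq_getElem w false h2
  have hinj : ∀ w ∈ F, ∀ v ∈ F,
      (fun j : Fin n => w.getD j false) = (fun j : Fin n => v.getD j false) → w = v := by
    intro w hw v hv h
    rw [← hrec w hw, ← hrec v hv, h]
  calc ∑ w ∈ F, ν w ^ s * d w
      = ∑ f ∈ F.image (fun w => fun j : Fin n => w.getD j false),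
          ν (List.ofFn f) ^ s * d (List.ofFn f) := by
        rw [Finset.sum_image hinj]
        exact Finset.sum_congr rfl fun w hw => by rw [hrec w hw]
    _ ≤ ∑ f : Fin n → Bool, ν (List.ofFn f) ^ s * d (List.ofFn f) := by
        apply Finset.sum_le_sum_of_subset_of_nonneg (Finset.subset_univ _)
        intro f _ _
        exact mul_nonneg (Real.rpow_nonneg (hν0 _) _) (hd0 _)
    _ ≤ ν [] ^ s * d [] := sum_len_le ν s d hdle n

/-- The key estimate: the s'-weights of the strings where d exceeds 2^i sum to at most
2^(-i) * 2^((s'-s)c) / (1 - 2^(-(s'-s)ε)). -/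
theorem weight_sum_bound
    (ν : List Bool → ℝ) (hν : IsProbMeasure ν) (s s' c ε : ℝ)
    (hs : 0 ≤ s) (hss' : s < s') (hε : 0 < ε)
    (hbound : ∀ x : List Bool, ν x ≤ (2 : ℝ) ^ (c - ε * x.length))
    (d : List Bool → ℝ) (hd : IsSupergale ν s d) (hdone : d [] ≤ 1) (i : ℕ) :
    (Summable fun w : {w : List Bool // (2 : ℝ) ^ i < d w} => ν w.val ^ s') ∧
      (∑' w : {w : List Bool // (2 : ℝ) ^ i < d w}, ν w.val ^ s') ≤
        (2 : ℝ) ^ (-(i : ℤ)) * (2 : ℝ) ^ ((s' - s) * c) /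
          (1 - (2 : ℝ) ^ (-((s' - s) * ε))) := by
  obtain ⟨hν1, hν0, -⟩ := hν
  obtain ⟨hd0, hdle⟩ := hd
  have ht : 0 < s' - s := sub_pos.2 hss'
  set t := s' - s with hts
  set r : ℝ := (2 : ℝ) ^ (-(t * ε)) with hrdef
  set K : ℝ := (2 : ℝ) ^ (t * c) with hKdef
  have hr0 : 0 < r := Real.rpow_pos_of_pos two_pos _
  have hr1 : r < 1 :=
    Real.rpow_lt_one_of_one_lt_of_neg one_lt_two (neg_lt_zero.2 (mul_pos ht hε))
  have h2i : (0 : ℝ) < 2 ^ i := by positivity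
  have hK0 : 0 < K := Real.rpow_pos_of_pos two_pos _
  have hpt : ∀ w : List Bool, ν w ^ s' ≤ (2 : ℝ) ^ (t * (c - ε * w.length)) * ν w ^ s := by
    intro w
    rcases eq_or_lt_of_le (hν0 w) with h | h
    · rw [← h, Real.zero_rpow (lt_of_le_of_lt hs hss').ne']
      positivity
    · have hts' : t + s = s' := by rw [hts]; ring
      rw [← hts', Real.rpow_add h]
      apply mul_le_mul_of_nonneg_right _ (Real.rpow_nonneg (hν0 w) s)
      calc ν w ^ t ≤ ((2 : ℝ) ^ (c - ε * w.length)) ^ t :=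
            Real.rpow_le_rpow (hν0 w) (hbound w) ht.le
        _ = (2 : ℝ) ^ (t * (c - ε * w.length)) := by
            rw [← Real.rpow_mul (by norm_num : (0:ℝ) ≤ 2), mul_comm]
  have hKr : ∀ n : ℕ, (2 : ℝ) ^ (t * (c - ε * n)) = K * r ^ n := by
    intro n
    have h1 : t * (c - ε * n) = t * c + -(t * ε) * (n : ℝ) := by ring
    have h2 : (2:ℝ) ^ (-(t * ε) * (n : ℝ)) = r ^ n := by
      rw [Real.rpow_mul (by norm_num : (0:ℝ) ≤ 2), Real.rpow_natCast, hrdef]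
    rw [h1, Real.rpow_add two_pos, h2, hKdef]
  have hlen : ∀ (n : ℕ) (G : Finset (List Bool)), (∀ w ∈ G, (2:ℝ)^i < d w) →
      (∀ w ∈ G, w.length = n) → ∑ w ∈ G, ν w ^ s' ≤ ((2:ℝ) ^ i)⁻¹ * K * r ^ n := by
    intro n G hGd hGn
    have h1 : ∑ w ∈ G, ν w ^ s ≤ ((2 : ℝ) ^ i)⁻¹ := by
      have hb : (2:ℝ)^i * ∑ w ∈ G, ν w ^ s ≤ 1 := by
        rw [Finset.mul_sum]
        calc ∑ w ∈ G, (2:ℝ)^i * ν w ^ s ≤ ∑ w ∈ G, ν w ^ s * d w := by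
              apply Finset.sum_le_sum
              intro w hw
              rw [mul_comm]
              exact mul_le_mul_of_nonneg_left (hGd w hw).le (Real.rpow_nonneg (hν0 w) s)
          _ ≤ ν [] ^ s * d [] := finset_len_le ν hν0 s d hd0 hdle n G hGn
          _ ≤ 1 := by rw [hν1, Real.one_rpow, one_mul]; exact hdone
      calc ∑ w ∈ G, ν w ^ s = ((2:ℝ)^i)⁻¹ * ((2:ℝ)^i * ∑ w ∈ G, ν w ^ s) := by
            field_simp
        _ ≤ ((2:ℝ)^i)⁻¹ * 1 := mul_le_mul_of_nonneg_left hb (by positivity)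
        _ = ((2:ℝ)^i)⁻¹ := mul_one _
    calc ∑ w ∈ G, ν w ^ s' ≤ ∑ w ∈ G, K * r ^ n * ν w ^ s := by
          apply Finset.sum_le_sum
          intro w hw
          have h2 := hpt w
          rwa [hGn w hw, hKr n] at h2
      _ = K * r ^ n * ∑ w ∈ G, ν w ^ s := (Finset.mul_sum _ _ _).symm
      _ ≤ K * r ^ n * ((2:ℝ)^i)⁻¹ := by
          apply mul_le_mul_of_nonneg_left h1 (by positivity)
      _ = ((2:ℝ)^i)⁻¹ * K * r ^ n := by ring
  have key : ∀ F : Finset {w : List Bool // (2:ℝ)^i < d w},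
      ∑ w ∈ F, ν w.val ^ s' ≤ (2:ℝ)^(-(i:ℤ)) * K / (1 - r) := by
    intro F
    set G : Finset (List Bool) := F.image Subtype.val with hG
    have hsum : ∑ w ∈ F, ν w.val ^ s' = ∑ w ∈ G, ν w ^ s' := by
      rw [hG, Finset.sum_image (fun x _ y _ h => Subtype.ext h)]
    have hGd : ∀ w ∈ G, (2:ℝ)^i < d w := by
      intro w hw
      rw [hG] at hw
      obtain ⟨x, -, rfl⟩ := Finset.mem_image.1 hw
      exact x.2
    set N := (G.sup List.length) + 1 with hN
    have hmaps : ∀ w ∈ G, w.length ∈ Finset.range N :=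
      fun w hw => Finset.mem_range.2 (Nat.lt_succ_of_le (Finset.le_sup hw))
    rw [hsum, ← Finset.sum_fiberwise_of_maps_to hmaps]
    calc ∑ n ∈ Finset.range N, ∑ w ∈ G.filter (fun w => w.length = n), ν w ^ s'
        ≤ ∑ n ∈ Finset.range N, ((2:ℝ)^i)⁻¹ * K * r ^ n := by
          apply Finset.sum_le_sum
          intro n _
          exact hlen n _ (fun w hw => hGd w (Finset.mem_filter.1 hw).1)
            (fun w hw => (Finset.mem_filter.1 hw).2)
      _ = ((2:ℝ)^i)⁻¹ * K * ∑ n ∈ Finset.range N, r ^ n := by rw [Finset.mul_sum]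
      _ ≤ ((2:ℝ)^i)⁻¹ * K * (1 - r)⁻¹ := by
          apply mul_le_mul_of_nonneg_left _ (by positivity)
          rw [← tsum_geometric_of_lt_one hr0.le hr1]
          exact Summable.sum_le_tsum _ (fun n _ => by positivity)
            (summable_geometric_of_lt_one hr0.le hr1)
      _ = (2:ℝ)^(-(i:ℤ)) * K / (1 - r) := by
          rw [zpow_neg, zpow_natCast, div_eq_mul_inv]
  exact ⟨summable_of_sum_le (fun w => Real.rpow_nonneg (hν0 w.val) s') key,
    Summable.tsum_le_of_sum_le (summable_of_sum_le (fun w => Real.rpow_nonneg (hν0 w.val) s') key) key⟩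
end
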